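/- Let L be a line arrangement over any field having a modular point of multiplicity m > 2 and a crossing point q of multiplicity n > m. Then p and q are the only modular points of L. -/

import Mathlib

open Projectivization

/-- The projective plane over `K`, with points (and, dually, lines) given by
projectivizing `K^3`. -/
abbrev PP (K : Type*) [Field K] := Projectivization K (Fin 3 → K)

/-- Incidence: the point `p` lies on the line `l` (given by dual coordinates):
the dot product of (any) homogeneous coordinates vanishes. -/
def incid {K : Type*} [Field K] (p l : PP K) : Prop :=
  dotProduct p.rep l.rep = 0

/-- The multiplicity of a point `p` with respect to a line arrangement `L`:
the number of lines of `L` passing through `p`. -/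
noncomputable def mult {K : Type*} [Field K] (L : Set (PP K)) (p : PP K) : ℕ :=
  {l ∈ L | incid p l}.ncard

/-- `p` is a crossing point of the arrangement `L`. -/
def crossing {K : Type*} [Field K] (L : Set (PP K)) (p : PP K) : Prop :=
  2 ≤ mult L p

/-- `p` is a modular point of `L`: a crossing point such that for every other
crossing point `q`, some line of `L` passes through both `p` and `q`. -/
def modular {K : Type*} [Field K] (L : Set (PP K)) (p : PP K) : Prop :=
  crossing L p ∧ ∀ q, crossing L q → q ≠ p → ∃ l ∈ L, incid p l ∧ incid q l

/-- `t_k`: the number of crossing points of `L` of multiplicity exactly `k`. -/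
noncomputable def tk {K : Type*} [Field K] (L : Set (PP K)) (k : ℕ) : ℕ :=
  {p | mult L p = k}.ncard

/-- A pencil: all lines pass through one common point. -/
def isPencil {K : Type*} [Field K] (L : Set (PP K)) : Prop :=
  ∃ p, ∀ l ∈ L, incid p l

/-- A near pencil: an arrangement of `s ≥ 3` lines, exactly `s - 1` of which
are concurrent. -/
def isNearPencil {K : Type*} [Field K] (L : Set (PP K)) : Prop :=
  3 ≤ L.ncard ∧ ∃ p, {l ∈ L | incid p l}.ncard + 1 = L.ncard

/-!
Every line of the arrangement passes through `p` or `q`: a line `l` missing both would give an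
injection of the lines through `q` into the lines through `p` (send `b` to the line of `L` joining
`p` to the crossing point `b ∩ l`, which exists by modularity of `p`), contradicting `m < n`.
Hence any crossing point other than `p` lies on a line through `q`, so `q` is modular. A further
modular point `r` lies on exactly two lines of `L`, `rp` and `rq`; but a line through `p` and a
line through `q`, both different from these and from `pq`, meet in a crossing point lying on
neither, so `r` cannot be joined to it.
-/

namespace Projectivization

open scoped LinearAlgebra.Projectivization

variable {K : Type*} [Field K] [DecidableEq K]

theorem eq_cross_of_orthogonal {v w l : ℙ K (Fin 3 → K)} (h : v ≠ w)
    (hlv : l.orthogonal v) (hlw : l.orthogonal w) : l = cross v w := by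
  induction v with | h v hv => induction w with | h w hw => induction l with | h l hl =>
  rw [orthogonal_mk] at hlv hlw
  rw [cross_mk_of_ne hv hw h, mk_eq_mk_iff_crossProduct_eq_zero, cross_cross_eq_smul_sub_smul',
    hlw, dotProduct_comm, hlv, zero_smul, zero_smul, sub_zero]

end Projectivization

section Incidence

variable {K : Type*} [Field K]

theorem incid_iff_orthogonal {p l : PP K} : incid p l ↔ p.orthogonal l := by
  conv_rhs => rw [← p.mk_rep, ← l.mk_rep]
  rfl

theorem incid_comm {p l : PP K} : incid p l ↔ incid l p := by
  simp only [incid_iff_orthogonal, orthogonal_comm]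

theorem exists_common_line {p q : PP K} (h : p ≠ q) : ∃ l, incid p l ∧ incid q l := by
  classical
  exact ⟨cross p q, incid_iff_orthogonal.2 (orthogonal_cross_left h),
    incid_iff_orthogonal.2 (orthogonal_cross_right h)⟩

theorem exists_common_point {l₁ l₂ : PP K} (h : l₁ ≠ l₂) : ∃ x, incid x l₁ ∧ incid x l₂ := by
  simpa only [incid_comm (p := l₁), incid_comm (p := l₂)] using exists_common_line h

theorem eq_or_eq_of_incid {p q l₁ l₂ : PP K} (hp₁ : incid p l₁) (hq₁ : incid q l₁)
    (hp₂ : incid p l₂) (hq₂ : incid q l₂) : p = q ∨ l₁ = l₂ := by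
  classical
  refine or_iff_not_imp_left.2 fun h => ?_
  simp only [incid_iff_orthogonal, orthogonal_comm (v := p), orthogonal_comm (v := q)] at *
  rw [eq_cross_of_orthogonal h hp₁ hq₁, eq_cross_of_orthogonal h hp₂ hq₂]

end Incidence

section Arrangement

variable {K : Type*} [Field K] {L : Set (PP K)}

theorem crossing_of_incid_incid (hL : L.Finite) {s l₁ l₂ : PP K} (h₁ : l₁ ∈ L) (h₂ : l₂ ∈ L)
    (hne : l₁ ≠ l₂) (hs₁ : incid s l₁) (hs₂ : incid s l₂) : crossing L s := by
  have hsub : ({l₁, l₂} : Set (PP K)) ⊆ {l ∈ L | incid s l} := by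
    rintro l (rfl | rfl)
    exacts [⟨h₁, hs₁⟩, ⟨h₂, hs₂⟩]
  exact (Set.ncard_pair hne).ge.trans (Set.ncard_le_ncard hsub (hL.subset (Set.sep_subset _ _)))

theorem crossing.exists_incid_incid {s : PP K} (hs : crossing L s) :
    ∃ l₁ ∈ L, ∃ l₂ ∈ L, l₁ ≠ l₂ ∧ incid s l₁ ∧ incid s l₂ := by
  obtain ⟨⟨l₁, ⟨h₁, hs₁⟩, l₂, ⟨h₂, hs₂⟩, hne⟩, -⟩ :=
    Set.one_lt_ncard_iff_nontrivial_and_finite.1 (Nat.lt_of_lt_of_le one_lt_two hs)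
  exact ⟨l₁, h₁, l₂, h₂, hne, hs₁, hs₂⟩

theorem exists_incid_ne_ne {p : PP K} (hp : 2 < mult L p) (a b : PP K) :
    ∃ l ∈ L, incid p l ∧ l ≠ a ∧ l ≠ b := by
  have hlt : ({a, b} : Set (PP K)).ncard < mult L p :=
    (Set.ncard_insert_le a {b}).trans_lt (by rwa [Set.ncard_singleton])
  obtain ⟨l, ⟨hl, hpl⟩, hab⟩ := Set.exists_mem_notMem_of_ncard_lt_ncard hlt
  simp only [Set.mem_insert_iff, Set.mem_singleton_iff, not_or] at hab
  exact ⟨l, hl, hpl, hab⟩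

variable {p q : PP K}

theorem incid_or_incid_of_modular (hL : L.Finite) (hp : modular L p) (hpq : mult L p < mult L q)
    {l : PP K} (hl : l ∈ L) : incid p l ∨ incid q l := by
  by_contra! ⟨hpl, hql⟩
  have hproj : ∀ b, ∃ c s, b ∈ {l' ∈ L | incid q l'} →
      c ∈ {l' ∈ L | incid p l'} ∧ incid s b ∧ incid s l ∧ incid s c := by
    intro b
    by_cases hb : b ∈ {l' ∈ L | incid q l'}
    · have hbl : b ≠ l := fun h => hql (h ▸ hb.2)
      obtain ⟨s, hsb, hsl⟩ := exists_common_point hbl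
      obtain ⟨c, hc, hpc, hsc⟩ :=
        hp.2 s (crossing_of_incid_incid hL hb.1 hl hbl hsb hsl) (fun h => hpl (h ▸ hsl))
      exact ⟨c, s, fun _ => ⟨⟨hc, hpc⟩, hsb, hsl, hsc⟩⟩
    · exact ⟨b, b, fun h => absurd h hb⟩
  choose c s hcs using hproj
  have hinj : Set.InjOn c {l' ∈ L | incid q l'} := by
    intro b₁ hb₁ b₂ hb₂ hc
    obtain ⟨⟨-, hpc₁⟩, hs₁b, hs₁l, hs₁c⟩ := hcs b₁ hb₁
    obtain ⟨-, hs₂b, hs₂l, hs₂c⟩ := hcs b₂ hb₂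
    rw [← hc] at hs₂c
    have hs : s b₁ = s b₂ :=
      (eq_or_eq_of_incid hs₁c hs₂c hs₁l hs₂l).resolve_right fun h => hpl (h ▸ hpc₁)
    rw [← hs] at hs₂b
    exact (eq_or_eq_of_incid hb₁.2 hs₁b hb₂.2 hs₂b).resolve_left fun h => hql (h ▸ hs₁l)
  have hle : mult L q ≤ mult L p := Set.ncard_le_ncard_of_injOn c (fun b hb => (hcs b hb).1) hinj
    (hL.subset (Set.sep_subset _ _))
  omega

theorem exists_incid_of_forall_incid_or_incid (hcover : ∀ l ∈ L, incid p l ∨ incid q l)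
    {r : PP K} (hr : crossing L r) (hrp : r ≠ p) : ∃ l ∈ L, incid q l ∧ incid r l := by
  obtain ⟨l₁, h₁, l₂, h₂, hne, hr₁, hr₂⟩ := hr.exists_incid_incid
  rcases hcover l₁ h₁ with hp₁ | hq₁
  · rcases hcover l₂ h₂ with hp₂ | hq₂
    · exact absurd ((eq_or_eq_of_incid hr₁ hp₁ hr₂ hp₂).resolve_left hrp) hne
    · exact ⟨l₂, h₂, hq₂, hr₂⟩
  · exact ⟨l₁, h₁, hq₁, hr₁⟩

theorem modular_of_forall_incid_or_incid (hcover : ∀ l ∈ L, incid p l ∨ incid q l)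
    (hq : crossing L q) (hpq : ∃ l ∈ L, incid p l ∧ incid q l) : modular L q := by
  refine ⟨hq, fun r hr _ => ?_⟩
  rcases eq_or_ne r p with rfl | hrp
  · obtain ⟨l, hl, hrl, hql⟩ := hpq
    exact ⟨l, hl, hql, hrl⟩
  · exact exists_incid_of_forall_incid_or_incid hcover hr hrp

theorem not_modular_of_forall_incid_or_incid (hL : L.Finite)
    (hcover : ∀ l ∈ L, incid p l ∨ incid q l) (hpq : p ≠ q) (hp : 2 < mult L p)
    (hq : 2 < mult L q) {r : PP K} (hrp : r ≠ p) (hrq : r ≠ q) : ¬ modular L r := by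
  intro hr
  obtain ⟨a, ha, hpa, hra⟩ :=
    exists_incid_of_forall_incid_or_incid (fun l hl => (hcover l hl).symm) hr.1 hrq
  obtain ⟨b, hb, hqb, hrb⟩ := exists_incid_of_forall_incid_or_incid hcover hr.1 hrp
  have hlines : ∀ l ∈ L, incid r l → l = a ∨ l = b := fun l hl hrl =>
    (hcover l hl).imp (fun hpl => (eq_or_eq_of_incid hrl hpl hra hpa).resolve_left hrp)
      (fun hql => (eq_or_eq_of_incid hrl hql hrb hqb).resolve_left hrq)
  obtain ⟨e, hpe, hqe⟩ := exists_common_line hpq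
  obtain ⟨a', ha', hpa', ha'a, ha'e⟩ := exists_incid_ne_ne hp a e
  obtain ⟨b', hb', hqb', hb'b, hb'e⟩ := exists_incid_ne_ne hq b e
  have hqa' : ¬ incid q a' := fun h => ha'e ((eq_or_eq_of_incid hpa' h hpe hqe).resolve_left hpq)
  have hpb' : ¬ incid p b' := fun h => hb'e ((eq_or_eq_of_incid h hqb' hpe hqe).resolve_left hpq)
  have ha'b' : a' ≠ b' := fun h => hpb' (h ▸ hpa')
  obtain ⟨s, hsa', hsb'⟩ := exists_common_point ha'b'
  have hra' : ¬ incid r a' := fun h => (hlines a' ha' h).elim ha'a fun h' => hqa' (h' ▸ hqb)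
  obtain ⟨c, hc, hrc, hsc⟩ :=
    hr.2 s (crossing_of_incid_incid hL ha' hb' ha'b' hsa' hsb') fun h => hra' (h ▸ hsa')
  rcases hlines c hc hrc with rfl | rfl
  · have hsp : s = p := (eq_or_eq_of_incid hsc hpa hsa' hpa').resolve_right (Ne.symm ha'a)
    exact hpb' (hsp ▸ hsb')
  · have hsq : s = q := (eq_or_eq_of_incid hsc hqb hsb' hqb').resolve_right (Ne.symm hb'b)
    exact hqa' (hsq ▸ hsa')

end Arrangement

/-- if p is modular of multiplicity m > 2 and q is a crossing point
of multiplicity n > m, then p and q are the only modular points of L. -/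
theorem only_two_modular_points {K : Type*} [Field K] (L : Set (PP K))
    (hfin : L.Finite) (p q : PP K) (m n : ℕ)
    (hp : modular L p) (hpm : mult L p = m) (hm : 2 < m)
    (hq : crossing L q) (hqn : mult L q = n) (hmn : m < n) :
    modular L q ∧ ∀ r, modular L r → r = p ∨ r = q := by
  have hpq : p ≠ q := by
    rintro rfl
    omega
  have hcover : ∀ l ∈ L, incid p l ∨ incid q l := fun l hl =>
    incid_or_incid_of_modular hfin hp (by omega) hl
  refine ⟨modular_of_forall_incid_or_incid hcover hq (hp.2 q hq hpq.symm), fun r hr => ?_⟩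
  by_contra! ⟨hrp, hrq⟩
  exact not_modular_of_forall_incid_or_incid hfin hcover hpq (by omega) (by omega) hrp hrq hr
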